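/- arXiv:2010.13966 — 2 statements merged into one kernel-verified Lean document; each statement's English description precedes it below -/
import Mathlib

section
/- Under assumptions (A1)-(A4) with n > 2, the graph satisfies CD(K,n) at an interior vertex x if and only if for all f ∈ ℝ^Ω with f(x) = 0: Γ₂^Ω(f,f)(x) − (1/(n−2))(Δ_Ω f)²(x) + (3K/(n−1))Γ^Ω(f,f)(x) + ((n+2)²K²/(8m(n−1)²))⟨f,f⟩_Ω − ((n+2)K/((n−1)(n−2)m))⟨f,1⟩_Ω Δ_Ω f(x) − (n(n+2)²K²/(8(n−2)(n−1)²m²))⟨f,1⟩_Ω² ≥ 0. -/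
open Finset

variable {V : Type*} [Fintype V] [DecidableEq V]

/-- The weighted graph Laplacian: `Δu(x) = (1/m x) ∑_y (u y - u x) w x y`. -/
noncomputable def glap (m : V → ℝ) (w : V → V → ℝ) (u : V → ℝ) (x : V) : ℝ :=
  (1 / m x) * ∑ y, (u y - u x) * w x y

/-- The carré du champ operator `Γ(u,v) = (1/2)(Δ(uv) - vΔu - uΔv)`. -/
noncomputable def gGam (m : V → ℝ) (w : V → V → ℝ) (u v : V → ℝ) (x : V) : ℝ :=
  (1 / 2) * (glap m w (fun z => u z * v z) x - v x * glap m w u x - u x * glap m w v x)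

/-- The iterated carré du champ `Γ₂(u,v) = (1/2)(ΔΓ(u,v) - Γ(Δu,v) - Γ(u,Δv))`. -/
noncomputable def gGam2 (m : V → ℝ) (w : V → V → ℝ) (u v : V → ℝ) (x : V) : ℝ :=
  (1 / 2) * (glap m w (gGam m w u v) x - gGam m w (glap m w u) v x - gGam m w u (glap m w v) x)

/-- Vertex inner product `⟨u,v⟩ = ∑_x u x v x m x`. -/
noncomputable def vip (m : V → ℝ) (u v : V → ℝ) : ℝ := ∑ x, u x * v x * m x

/-- Edge (1-form) inner product of differentials:
`⟨du,dv⟩ = ∑_{{x,y}∈E} (u y - u x)(v y - v x) w x y = (1/2)∑_{x,y}`. -/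
noncomputable def eip (w : V → V → ℝ) (u v : V → ℝ) : ℝ :=
  (1 / 2) * ∑ x, ∑ y, (u y - u x) * (v y - v x) * w x y

/-- `(m,w)` is a weighted graph structure: positive vertex measure, symmetric
nonnegative edge weights, no loops. -/
def WeightedGraph (m : V → ℝ) (w : V → V → ℝ) : Prop :=
  (∀ x, 0 < m x) ∧ (∀ x y, w x y = w y x) ∧ (∀ x y, 0 ≤ w x y) ∧ (∀ x, w x x = 0)

/-- The underlying simple graph: `x ∼ y` iff `w x y > 0`. -/
def wgraph (w : V → V → ℝ) : SimpleGraph V := SimpleGraph.fromRel (fun x y => 0 < w x y)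

/-- The Bakry-Émery curvature-dimension condition `CD(K,n)`. -/
def CD (m : V → ℝ) (w : V → V → ℝ) (K n : ℝ) : Prop :=
  ∀ (f : V → ℝ) (x : V), gGam2 m w f f x ≥ (1 / n) * (glap m w f x) ^ 2 + K * gGam m w f f x

/-- `B` is a vertex boundary: nonempty, independent, and every boundary vertex is
adjacent to some interior vertex. -/
def GraphBoundary (w : V → V → ℝ) (B : Finset V) : Prop :=
  B.Nonempty ∧ (∀ x ∈ B, ∀ y ∈ B, w x y = 0) ∧ (∀ x ∈ B, ∃ y, y ∉ B ∧ 0 < w x y)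

/-- `σ` is a Steklov eigenvalue: there is `u`, harmonic on the interior, with
boundary restriction nonzero, and `∂u/∂n = σ u` on `B`. -/
def SteklovEig (m : V → ℝ) (w : V → V → ℝ) (B : Finset V) (σ : ℝ) : Prop :=
  ∃ u : V → ℝ, (∃ x ∈ B, u x ≠ 0) ∧ (∀ x, x ∉ B → glap m w u x = 0) ∧
    (∀ x ∈ B, - glap m w u x = σ * u x)

/-- `μ` is an eigenvalue of `-Δ`. -/
def LapEig (m : V → ℝ) (w : V → V → ℝ) (μ : ℝ) : Prop :=
  ∃ u : V → ℝ, u ≠ 0 ∧ ∀ x, - glap m w u x = μ * u x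

/-- The edge weight of the induced graph on the interior `Ω = Bᶜ`. -/
def wRes (B : Finset V) (w : V → V → ℝ) : V → V → ℝ :=
  fun x y => if x ∈ B ∨ y ∈ B then 0 else w x y

/-!
Interior vertices `z` see both boundary vertices with weight `w(a,z) = w(b,z) = c m(z)`,
`c = (n+2)K/(2(n-1))`, and the degree condition at `a` gives `m(Ω) = 2n m(a)/(n+2)`.
Expanding `2 m(x) Γ₂(f,f)(x) = ∑_z (Γ(f,f)(z) - Γ(f,f)(x) - (Δf(z) - Δf(x))(f z - f x)) w(x,z)`
and splitting off the two boundary terms expresses the full operators at `x` through those of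
`Ω` and the values `f(a)`, `f(b)`. For `f(x) = 0` this yields
`Γ₂(f,f)(x) - (Δf(x))²/n - KΓ(f,f)(x) = (rigidity form of f|Ω) + (n-2)c²/(2n) (f(a) + f(b) - q)²`
with `q` depending only on `f|Ω`. Taking `f(a) = f(b) = q/2` gives necessity. Sufficiency follows
since the square is nonnegative and subtracting the constant `f(x)` changes none of `Δ, Γ, Γ₂`.
-/

lemma gGam_eq_sum {V : Type*} [Fintype V] (m : V → ℝ) (w : V → V → ℝ) (u v : V → ℝ) (x : V) :
    gGam m w u v x = 1 / (2 * m x) * ∑ z, (u z - u x) * (v z - v x) * w x z := by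
  simp only [gGam, glap, one_div, mul_inv, Finset.mul_sum, ← Finset.sum_sub_distrib]
  exact Finset.sum_congr rfl fun z _ => by ring

lemma gGam2_self_eq_sum {V : Type*} [Fintype V] (m : V → ℝ) (w : V → V → ℝ) (u : V → ℝ)
    (x : V) :
    gGam2 m w u u x = 1 / (2 * m x) * ∑ z, (gGam m w u u z - gGam m w u u x
      - (glap m w u z - glap m w u x) * (u z - u x)) * w x z := by
  have hΔΓ : glap m w (gGam m w u u) x
      = 1 / m x * ∑ z, (gGam m w u u z - gGam m w u u x) * w x z := rfl
  rw [gGam2, hΔΓ, gGam_eq_sum m w (glap m w u) u x, gGam_eq_sum m w u (glap m w u) x]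
  simp only [one_div, mul_inv, Finset.mul_sum, ← Finset.sum_sub_distrib]
  exact Finset.sum_congr rfl fun z _ => by ring

lemma glap_sub_const {V : Type*} [Fintype V] (m : V → ℝ) (w : V → V → ℝ) (u : V → ℝ) (C : ℝ) :
    glap m w (fun z => u z - C) = glap m w u := by
  funext x
  simp only [glap, sub_sub_sub_cancel_right]

lemma gGam_sub_const {V : Type*} [Fintype V] (m : V → ℝ) (w : V → V → ℝ) (u : V → ℝ) (C : ℝ) :
    gGam m w (fun z => u z - C) (fun z => u z - C) = gGam m w u u := by
  funext x
  simp only [gGam_eq_sum, sub_sub_sub_cancel_right]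

lemma gGam2_sub_const {V : Type*} [Fintype V] (m : V → ℝ) (w : V → V → ℝ) (u : V → ℝ)
    (C : ℝ) (x : V) :
    gGam2 m w (fun z => u z - C) (fun z => u z - C) x = gGam2 m w u u x := by
  simp only [gGam2_self_eq_sum, gGam_sub_const, glap_sub_const, sub_sub_sub_cancel_right]

section Restriction

variable {B : Finset V} {y : V}

lemma sum_mul_wRes_of_notMem (hy : y ∉ B) (w : V → V → ℝ) (g : V → ℝ) :
    ∑ z, g z * wRes B w y z = ∑ z ∈ Bᶜ, g z * w y z := by
  rw [← Finset.sum_add_sum_compl B]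
  have hB : ∀ z ∈ B, g z * wRes B w y z = 0 := fun z hz => by simp [wRes, hz]
  have hBc : ∀ z ∈ Bᶜ, g z * wRes B w y z = g z * w y z := fun z hz => by
    simp [wRes, hy, Finset.mem_compl.mp hz]
  rw [Finset.sum_eq_zero hB, Finset.sum_congr rfl hBc, zero_add]

variable (m : V → ℝ) (w : V → V → ℝ)

lemma glap_wRes_of_notMem (hy : y ∉ B) (u : V → ℝ) :
    glap m (wRes B w) u y = 1 / m y * ∑ z ∈ Bᶜ, (u z - u y) * w y z := by
  rw [glap, sum_mul_wRes_of_notMem hy]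

lemma gGam_wRes_of_notMem (hy : y ∉ B) (u v : V → ℝ) :
    gGam m (wRes B w) u v y = 1 / (2 * m y) * ∑ z ∈ Bᶜ, (u z - u y) * (v z - v y) * w y z := by
  rw [gGam_eq_sum, sum_mul_wRes_of_notMem hy]

lemma gGam2_wRes_of_notMem (hy : y ∉ B) (u : V → ℝ) :
    gGam2 m (wRes B w) u u y = 1 / (2 * m y) * ∑ z ∈ Bᶜ, (gGam m (wRes B w) u u z
      - gGam m (wRes B w) u u y - (glap m (wRes B w) u z - glap m (wRes B w) u y) * (u z - u y))
        * w y z := by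
  rw [gGam2_self_eq_sum, sum_mul_wRes_of_notMem hy]

lemma glap_eq_glap_wRes_add (hy : y ∉ B) (u : V → ℝ) :
    glap m w u y = glap m (wRes B w) u y + 1 / m y * ∑ z ∈ B, (u z - u y) * w y z := by
  rw [glap_wRes_of_notMem m w hy, glap, ← Finset.sum_add_sum_compl B]
  ring

lemma gGam_eq_gGam_wRes_add (hy : y ∉ B) (u v : V → ℝ) :
    gGam m w u v y = gGam m (wRes B w) u v y
      + 1 / (2 * m y) * ∑ z ∈ B, (u z - u y) * (v z - v y) * w y z := by
  rw [gGam_wRes_of_notMem m w hy, gGam_eq_sum, ← Finset.sum_add_sum_compl B]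
  ring

variable {m w}

lemma glap_wRes_congr {u u' : V → ℝ} (h : ∀ z ∉ B, u z = u' z) (hy : y ∉ B) :
    glap m (wRes B w) u y = glap m (wRes B w) u' y := by
  simp only [glap_wRes_of_notMem m w hy, h y hy]
  exact congrArg _ (Finset.sum_congr rfl fun z hz => by rw [h z (Finset.mem_compl.mp hz)])

lemma gGam_wRes_congr {u u' v v' : V → ℝ} (hu : ∀ z ∉ B, u z = u' z) (hv : ∀ z ∉ B, v z = v' z)
    (hy : y ∉ B) : gGam m (wRes B w) u v y = gGam m (wRes B w) u' v' y := by
  simp only [gGam_wRes_of_notMem m w hy, hu y hy, hv y hy]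
  exact congrArg _ (Finset.sum_congr rfl fun z hz => by
    rw [hu z (Finset.mem_compl.mp hz), hv z (Finset.mem_compl.mp hz)])

lemma gGam2_wRes_congr {u u' : V → ℝ} (h : ∀ z ∉ B, u z = u' z) (hy : y ∉ B) :
    gGam2 m (wRes B w) u u y = gGam2 m (wRes B w) u' u' y := by
  have hΓ : ∀ z ∉ B, gGam m (wRes B w) u u z = gGam m (wRes B w) u' u' z :=
    fun z hz => gGam_wRes_congr h h hz
  have hΔ : ∀ z ∉ B, glap m (wRes B w) u z = glap m (wRes B w) u' z :=
    fun z hz => glap_wRes_congr h hz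
  simp only [gGam2_wRes_of_notMem m w hy, hΓ y hy, hΔ y hy, h y hy]
  exact congrArg _ (Finset.sum_congr rfl fun z hz => by
    have hz := Finset.mem_compl.mp hz
    rw [hΓ z hz, hΔ z hz, h z hz])

end Restriction

-- `M` stands for the common measure `m a = m b` of the boundary vertices.
noncomputable def rigidityForm (m : V → ℝ) (w : V → V → ℝ) (B : Finset V) (M K n : ℝ)
    (f : V → ℝ) (x : V) : ℝ :=
  gGam2 m (wRes B w) f f x
    - (1 / (n - 2)) * (glap m (wRes B w) f x) ^ 2
    + (3 * K / (n - 1)) * gGam m (wRes B w) f f x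
    + ((n + 2) ^ 2 * K ^ 2 / (8 * M * (n - 1) ^ 2)) * (∑ z ∈ Bᶜ, f z * f z * m z)
    - ((n + 2) * K / ((n - 1) * (n - 2) * M)) * (∑ z ∈ Bᶜ, f z * m z) * glap m (wRes B w) f x
    - (n * (n + 2) ^ 2 * K ^ 2 / (8 * (n - 2) * (n - 1) ^ 2 * M ^ 2)) * (∑ z ∈ Bᶜ, f z * m z) ^ 2

lemma rigidityForm_congr {m : V → ℝ} {w : V → V → ℝ} {B : Finset V} {M K n : ℝ} {f f' : V → ℝ}
    (h : ∀ z ∉ B, f z = f' z) {x : V} (hx : x ∉ B) :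
    rigidityForm m w B M K n f x = rigidityForm m w B M K n f' x := by
  have hsum : ∀ g : (V → ℝ) → V → ℝ, (∀ z ∉ B, g f z = g f' z) →
      ∑ z ∈ Bᶜ, g f z = ∑ z ∈ Bᶜ, g f' z :=
    fun g hg => Finset.sum_congr rfl fun z hz => hg z (Finset.mem_compl.mp hz)
  simp only [rigidityForm, gGam2_wRes_congr h hx, gGam_wRes_congr h h hx, glap_wRes_congr h hx,
    hsum (fun f z => f z * f z * m z) fun z hz => by simp only [h z hz],
    hsum (fun f z => f z * m z) fun z hz => by simp only [h z hz]]

section Joined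

variable {m : V → ℝ} {w : V → V → ℝ} {B : Finset V} {c : ℝ}

lemma sum_mul_of_weight_eq_ite {p : V} (hp : ∀ z, w p z = if z ∈ B then 0 else c * m z)
    (g : V → ℝ) : ∑ z, g z * w p z = c * ∑ z ∈ Bᶜ, g z * m z := by
  simp only [hp, mul_ite, mul_zero, Finset.sum_ite, Finset.sum_const_zero, zero_add,
    Finset.filter_mem_eq_inter, Finset.filter_not, Finset.univ_inter,
    Finset.mul_sum]
  exact Finset.sum_congr rfl fun z _ => by ring

lemma glap_of_weight_eq_ite {p : V} (hp : ∀ z, w p z = if z ∈ B then 0 else c * m z)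
    (u : V → ℝ) :
    glap m w u p = c / m p * (∑ z ∈ Bᶜ, u z * m z - u p * ∑ z ∈ Bᶜ, m z) := by
  rw [glap, sum_mul_of_weight_eq_ite hp]
  simp only [sub_mul, Finset.sum_sub_distrib, ← Finset.mul_sum]
  ring

lemma gGam_self_of_weight_eq_ite {p : V} (hp : ∀ z, w p z = if z ∈ B then 0 else c * m z)
    (u : V → ℝ) :
    gGam m w u u p = c / (2 * m p) * (∑ z ∈ Bᶜ, u z * u z * m z
      - 2 * u p * ∑ z ∈ Bᶜ, u z * m z + u p ^ 2 * ∑ z ∈ Bᶜ, m z) := by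
  have hsq : ∀ z, (u z - u p) * (u z - u p) * m z
      = u z * u z * m z - 2 * u p * (u z * m z) + u p ^ 2 * m z := fun z => by ring
  rw [gGam_eq_sum, sum_mul_of_weight_eq_ite hp]
  simp only [hsq, Finset.sum_add_distrib, Finset.sum_sub_distrib, ← Finset.mul_sum]
  ring

lemma glap_eq_glap_wRes_add_of_weight_eq {y : V} (hy : y ∉ B) (hmy : m y ≠ 0)
    (hw : ∀ p ∈ B, w y p = c * m y) (u : V → ℝ) :
    glap m w u y = glap m (wRes B w) u y + c * ∑ p ∈ B, (u p - u y) := by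
  rw [glap_eq_glap_wRes_add m w hy, Finset.sum_congr rfl fun p hp => by rw [hw p hp],
    ← Finset.sum_mul]
  field_simp

lemma gGam_self_eq_gGam_wRes_add_of_weight_eq {y : V} (hy : y ∉ B) (hmy : m y ≠ 0)
    (hw : ∀ p ∈ B, w y p = c * m y) (u : V → ℝ) :
    gGam m w u u y = gGam m (wRes B w) u u y + c / 2 * ∑ p ∈ B, (u p - u y) ^ 2 := by
  rw [gGam_eq_gGam_wRes_add m w hy, Finset.sum_congr rfl fun p hp => by rw [hw p hp],
    ← Finset.sum_mul]
  field_simp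

end Joined

lemma weight_eq_of_pair {V : Type*} [DecidableEq V] {m : V → ℝ} {w : V → V → ℝ} {a b : V}
    {c : ℝ} (hsymm : ∀ y z, w y z = w z y)
    (ha : ∀ z, w a z = if z ∈ ({a, b} : Finset V) then 0 else c * m z)
    (hb : ∀ z, w b z = if z ∈ ({a, b} : Finset V) then 0 else c * m z)
    {y : V} (hy : y ∉ ({a, b} : Finset V)) : ∀ p ∈ ({a, b} : Finset V), w y p = c * m y := by
  intro p hp
  rcases Finset.mem_insert.mp hp with rfl | hp
  · rw [hsymm, ha, if_neg hy]
  · rw [Finset.mem_singleton.mp hp, hsymm, hb, if_neg hy]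

section Pair

variable {m : V → ℝ} {w : V → V → ℝ} {a b : V} {c : ℝ}

lemma gGam2_eq_of_pair_weight_eq (hab : a ≠ b) (hsymm : ∀ y z, w y z = w z y)
    (hm : ∀ y ∉ ({a, b} : Finset V), m y ≠ 0) (hmb : m b = m a)
    (ha : ∀ z, w a z = if z ∈ ({a, b} : Finset V) then 0 else c * m z)
    (hb : ∀ z, w b z = if z ∈ ({a, b} : Finset V) then 0 else c * m z)
    {x : V} (hx : x ∉ ({a, b} : Finset V)) {f : V → ℝ} (hf : f x = 0) :
    gGam2 m w f f x = gGam2 m (wRes {a, b} w) f f x + 2 * c * gGam m (wRes {a, b} w) f f x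
      + c ^ 2 * f a * f b + c ^ 2 / (4 * m a) * (2 * ∑ z ∈ ({a, b} : Finset V)ᶜ, f z * f z * m z
        - 4 * (f a + f b) * ∑ z ∈ ({a, b} : Finset V)ᶜ, f z * m z
        + 3 * (f a ^ 2 + f b ^ 2) * ∑ z ∈ ({a, b} : Finset V)ᶜ, m z) := by
  set B : Finset V := {a, b}
  have hw : ∀ y ∉ B, ∀ p ∈ B, w y p = c * m y := fun y hy => weight_eq_of_pair hsymm ha hb hy
  have hΔ : ∀ z ∉ B, glap m w f z = glap m (wRes B w) f z + c * (f a - f z + (f b - f z)) :=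
    fun z hz => by
      rw [glap_eq_glap_wRes_add_of_weight_eq hz (hm z hz) (hw z hz), Finset.sum_pair hab]
  have hΓ : ∀ z ∉ B, gGam m w f f z
      = gGam m (wRes B w) f f z + c / 2 * ((f a - f z) ^ 2 + (f b - f z) ^ 2) := fun z hz => by
    rw [gGam_self_eq_gGam_wRes_add_of_weight_eq hz (hm z hz) (hw z hz), Finset.sum_pair hab]
  have hmx := hm x hx
  have hG2 : ∑ z ∈ Bᶜ, (gGam m (wRes B w) f f z - gGam m (wRes B w) f f x
        - (glap m (wRes B w) f z - glap m (wRes B w) f x) * (f z - f x)) * w x z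
      = 2 * m x * gGam2 m (wRes B w) f f x := by
    rw [gGam2_wRes_of_notMem m w hx]
    field_simp
  have hG : ∑ z ∈ Bᶜ, f z * f z * w x z = 2 * m x * gGam m (wRes B w) f f x := by
    rw [gGam_wRes_of_notMem m w hx, hf]
    field_simp
    simp only [sub_zero]
  have hL : ∑ z ∈ Bᶜ, f z * w x z = m x * glap m (wRes B w) f x := by
    rw [glap_wRes_of_notMem m w hx, hf]
    field_simp
    simp only [sub_zero]
  have hint : ∑ z ∈ Bᶜ, (gGam m w f f z - gGam m w f f x
        - (glap m w f z - glap m w f x) * (f z - f x)) * w x z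
      = 2 * m x * gGam2 m (wRes B w) f f x + 3 * c * (2 * m x * gGam m (wRes B w) f f x)
        - c * (f a + f b) * (m x * glap m (wRes B w) f x) := by
    rw [← hG2, ← hG, ← hL, Finset.mul_sum, Finset.mul_sum, ← Finset.sum_add_distrib,
      ← Finset.sum_sub_distrib]
    refine Finset.sum_congr rfl fun z hz => ?_
    rw [hΔ z (Finset.mem_compl.mp hz), hΓ z (Finset.mem_compl.mp hz), hΔ x hx, hΓ x hx, hf]
    ring
  rw [gGam2_self_eq_sum, ← Finset.sum_add_sum_compl B, hint, Finset.sum_pair hab,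
    hw x hx a (by simp [B]), hw x hx b (by simp [B]), hΔ x hx, hΓ x hx,
    glap_of_weight_eq_ite ha, glap_of_weight_eq_ite hb, gGam_self_of_weight_eq_ite ha,
    gGam_self_of_weight_eq_ite hb, hmb, hf]
  field_simp
  ring

variable {K n : ℝ}

lemma gGam2_eq_rigidityForm_add (hab : a ≠ b) (hsymm : ∀ y z, w y z = w z y)
    (hm : ∀ y ∉ ({a, b} : Finset V), m y ≠ 0) (hma : m a ≠ 0) (hmb : m b = m a)
    (ha : ∀ z, w a z = if z ∈ ({a, b} : Finset V) then 0 else c * m z)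
    (hb : ∀ z, w b z = if z ∈ ({a, b} : Finset V) then 0 else c * m z)
    (hK : K ≠ 0) (hn : 2 < n) (hc : c = (n + 2) * K / (2 * (n - 1)))
    (hS : ∑ z ∈ ({a, b} : Finset V)ᶜ, m z = 2 * n * m a / (n + 2))
    {x : V} (hx : x ∉ ({a, b} : Finset V)) {f : V → ℝ} (hf : f x = 0) :
    gGam2 m w f f x = rigidityForm m w {a, b} (m a) K n f x
      + (n - 2) * c ^ 2 / (2 * n) * (f a + f b
          - 2 * glap m (wRes {a, b} w) f x / ((n - 2) * c)
          - n * (∑ z ∈ ({a, b} : Finset V)ᶜ, f z * m z) / ((n - 2) * m a)) ^ 2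
      + 1 / n * (glap m w f x) ^ 2 + K * gGam m w f f x := by
  have hw := weight_eq_of_pair hsymm ha hb hx
  have h1 : n - 1 ≠ 0 := by linarith
  have h2 : n - 2 ≠ 0 := by linarith
  have h3 : n + 2 ≠ 0 := by linarith
  have h4 : n ≠ 0 := by linarith
  rw [gGam2_eq_of_pair_weight_eq hab hsymm hm hmb ha hb hx hf,
    glap_eq_glap_wRes_add_of_weight_eq hx (hm x hx) hw,
    gGam_self_eq_gGam_wRes_add_of_weight_eq hx (hm x hx) hw, Finset.sum_pair hab,
    Finset.sum_pair hab, hS, hf, rigidityForm, hc]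
  field_simp
  ring

lemma cd_at_iff_rigidityForm_nonneg (hab : a ≠ b) (hsymm : ∀ y z, w y z = w z y)
    (hm : ∀ y ∉ ({a, b} : Finset V), m y ≠ 0) (hma : m a ≠ 0) (hmb : m b = m a)
    (ha : ∀ z, w a z = if z ∈ ({a, b} : Finset V) then 0 else c * m z)
    (hb : ∀ z, w b z = if z ∈ ({a, b} : Finset V) then 0 else c * m z)
    (hK : K ≠ 0) (hn : 2 < n) (hc : c = (n + 2) * K / (2 * (n - 1)))
    (hS : ∑ z ∈ ({a, b} : Finset V)ᶜ, m z = 2 * n * m a / (n + 2))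
    {x : V} (hx : x ∉ ({a, b} : Finset V)) :
    (∀ f : V → ℝ, gGam2 m w f f x ≥ 1 / n * (glap m w f x) ^ 2 + K * gGam m w f f x) ↔
      ∀ f : V → ℝ, f x = 0 → rigidityForm m w {a, b} (m a) K n f x ≥ 0 := by
  have key := fun (f : V → ℝ) (hf : f x = 0) =>
    gGam2_eq_rigidityForm_add hab hsymm hm hma hmb ha hb hK hn hc hS hx hf
  constructor
  · intro hCD f hf
    set q := (2 * glap m (wRes {a, b} w) f x / ((n - 2) * c)
      + n * (∑ z ∈ ({a, b} : Finset V)ᶜ, f z * m z) / ((n - 2) * m a)) / 2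
    set g : V → ℝ := fun z => if z ∈ ({a, b} : Finset V) then q else f z
    have hg : ∀ z ∉ ({a, b} : Finset V), g z = f z := fun z hz => if_neg hz
    have hP : ∑ z ∈ ({a, b} : Finset V)ᶜ, g z * m z = ∑ z ∈ ({a, b} : Finset V)ᶜ, f z * m z :=
      Finset.sum_congr rfl fun z hz => by rw [hg z (Finset.mem_compl.mp hz)]
    have hga : g a = q := if_pos (by simp)
    have hgb : g b = q := if_pos (by simp)
    have hkey := key g ((hg x hx).trans hf)
    rw [rigidityForm_congr hg hx, glap_wRes_congr hg hx, hP, hga, hgb] at hkey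
    have hsq : q + q - 2 * glap m (wRes {a, b} w) f x / ((n - 2) * c)
        - n * (∑ z ∈ ({a, b} : Finset V)ᶜ, f z * m z) / ((n - 2) * m a) = 0 := by ring
    rw [hsq] at hkey
    linarith [hCD g]
  · intro hE f
    have hkey := key (fun z => f z - f x) (sub_self _)
    simp only [gGam2_sub_const, glap_sub_const, gGam_sub_const] at hkey
    have hκ : 0 ≤ (n - 2) * c ^ 2 / (2 * n) := by
      have : 0 ≤ n - 2 := by linarith
      positivity
    linarith [hE (fun z => f z - f x) (sub_self (f x)), mul_nonneg hκ (sq_nonneg (f a - f x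
      + (f b - f x) - 2 * glap m (wRes {a, b} w) f x / ((n - 2) * c)
      - n * (∑ z ∈ ({a, b} : Finset V)ᶜ, (f z - f x) * m z) / ((n - 2) * m a)))]

end Pair

theorem stmt15_general (m : V → ℝ) (w : V → V → ℝ) (a b : V) (hW : WeightedGraph m w)
    (K n : ℝ) (hK : 0 < K) (hn : 2 < n)
    (hab : a ≠ b) (hnadj : w a b = 0)
    (hm : m a = m b)
    (hwe : ∀ x, x ∉ ({a, b} : Finset V) → w a x = w b x)
    (hDega : (1 / m a) * ∑ y, w a y = n * K / (n - 1))
    (hDb : ∀ x, x ∉ ({a, b} : Finset V) → 2 * w a x / m x = (n + 2) * K / (n - 1)) :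
    ∀ x, x ∉ ({a, b} : Finset V) →
      ((∀ f : V → ℝ,
          gGam2 m w f f x ≥ (1 / n) * (glap m w f x) ^ 2 + K * gGam m w f f x) ↔
       (∀ f : V → ℝ, f x = 0 →
          gGam2 m (wRes {a, b} w) f f x
            - (1 / (n - 2)) * (glap m (wRes {a, b} w) f x) ^ 2
            + (3 * K / (n - 1)) * gGam m (wRes {a, b} w) f f x
            + ((n + 2) ^ 2 * K ^ 2 / (8 * m a * (n - 1) ^ 2))
                * (∑ z ∈ ({a, b} : Finset V)ᶜ, f z * f z * m z)
            - ((n + 2) * K / ((n - 1) * (n - 2) * m a))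
                * (∑ z ∈ ({a, b} : Finset V)ᶜ, f z * m z)
                * glap m (wRes {a, b} w) f x
            - (n * (n + 2) ^ 2 * K ^ 2 / (8 * (n - 2) * (n - 1) ^ 2 * (m a) ^ 2))
                * (∑ z ∈ ({a, b} : Finset V)ᶜ, f z * m z) ^ 2 ≥ 0)) := by
  obtain ⟨hmpos, hsymm, -, hloop⟩ := hW
  obtain ⟨c, hc⟩ : ∃ c, c = (n + 2) * K / (2 * (n - 1)) := ⟨_, rfl⟩
  have hn1 : n - 1 ≠ 0 := by linarith
  have hwa : ∀ z ∉ ({a, b} : Finset V), w a z = c * m z := fun z hz => by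
    have h := hDb z hz
    have := (hmpos z).ne'
    rw [hc]
    field_simp at h ⊢
    linarith
  have ha : ∀ z, w a z = if z ∈ ({a, b} : Finset V) then 0 else c * m z := fun z => by
    split_ifs with hz
    · obtain rfl | rfl : z = a ∨ z = b := by simpa using hz
      exacts [hloop z, hnadj]
    · exact hwa z hz
  have hb : ∀ z, w b z = if z ∈ ({a, b} : Finset V) then 0 else c * m z := fun z => by
    split_ifs with hz
    · obtain rfl | rfl : z = a ∨ z = b := by simpa using hz
      exacts [(hsymm _ _).trans hnadj, hloop z]
    · rw [← hwe z hz, hwa z hz]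
  have hS : ∑ z ∈ ({a, b} : Finset V)ᶜ, m z = 2 * n * m a / (n + 2) := by
    have h := sum_mul_of_weight_eq_ite ha fun _ => 1
    simp only [one_mul] at h
    rw [h, hc] at hDega
    have := (hmpos a).ne'
    field_simp at hDega ⊢
    linarith
  exact fun x hx => cd_at_iff_rigidityForm_nonneg hab hsymm (fun y _ => (hmpos y).ne')
    (hmpos a).ne' hm.symm ha hb hK.ne' hn hc hS hx

/-- under (A1)-(A4) with `n > 2`, `CD(K,n)` holds at an interior
vertex `x` iff the interior inequality \eqref{eq-rigidity-n} holds for all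
`f ∈ ℝ^Ω` with `f(x) = 0`. -/
theorem stmt15 (m : V → ℝ) (w : V → V → ℝ) (a b : V) (hW : WeightedGraph m w)
    (K n : ℝ) (hK : 0 < K) (hn : 2 < n)
    (hab : a ≠ b) (hnadj : w a b = 0)
    (hm : m a = m b)
    (hadj : ∀ x, x ∉ ({a, b} : Finset V) → 0 < w a x)
    (hwe : ∀ x, x ∉ ({a, b} : Finset V) → w a x = w b x)
    (hDega : (1 / m a) * ∑ y, w a y = n * K / (n - 1))
    (hDegb : (1 / m b) * ∑ y, w b y = n * K / (n - 1))
    (hDb : ∀ x, x ∉ ({a, b} : Finset V) → 2 * w a x / m x = (n + 2) * K / (n - 1)) :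
    ∀ x, x ∉ ({a, b} : Finset V) →
      ((∀ f : V → ℝ,
          gGam2 m w f f x ≥ (1 / n) * (glap m w f x) ^ 2 + K * gGam m w f f x) ↔
       (∀ f : V → ℝ, f x = 0 →
          gGam2 m (wRes {a, b} w) f f x
            - (1 / (n - 2)) * (glap m (wRes {a, b} w) f x) ^ 2
            + (3 * K / (n - 1)) * gGam m (wRes {a, b} w) f f x
            + ((n + 2) ^ 2 * K ^ 2 / (8 * m a * (n - 1) ^ 2))
                * (∑ z ∈ ({a, b} : Finset V)ᶜ, f z * f z * m z)
            - ((n + 2) * K / ((n - 1) * (n - 2) * m a))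
                * (∑ z ∈ ({a, b} : Finset V)ᶜ, f z * m z)
                * glap m (wRes {a, b} w) f x
            - (n * (n + 2) ^ 2 * K ^ 2 / (8 * (n - 2) * (n - 1) ^ 2 * (m a) ^ 2))
                * (∑ z ∈ ({a, b} : Finset V)ᶜ, f z * m z) ^ 2 ≥ 0)) :=
  stmt15_general m w a b hW K n hK hn hab hnadj hm hwe hDega hDb
end

section
/- Under assumptions (A1)-(A4) with 1 < n < 2, the graph fails the Bakry-Émery curvature-dimension condition CD(K,n) at every interior vertex; and with n = 2, the graph satisfies CD(K,2) at an interior vertex if and only if |Ω| = 1. -/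
open Finset

variable {V : Type*} [Fintype V] [DecidableEq V]

section Aux

lemma glap_lin (m : V → ℝ) (w : V → V → ℝ) (u v : V → ℝ) (c : ℝ) (x : V) :
    glap m w (fun z => u z + c * v z) x = glap m w u x + c * glap m w v x := by
  simp only [glap]
  have h : ∀ y : V, ((u y + c * v y) - (u x + c * v x)) * w x y
      = (u y - u x) * w x y + c * ((v y - v x) * w x y) := by intro y; ring
  rw [Finset.sum_congr rfl (fun y _ => h y), Finset.sum_add_distrib, ← Finset.mul_sum]
  ring

lemma glap_aff (m : V → ℝ) (w : V → V → ℝ) (u : V → ℝ) (c e : ℝ) (x : V) :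
    glap m w (fun z => c + e * u z) x = e * glap m w u x := by
  simp only [glap]
  have h : ∀ y : V, ((c + e * u y) - (c + e * u x)) * w x y
      = e * ((u y - u x) * w x y) := by intro y; ring
  rw [Finset.sum_congr rfl (fun y _ => h y), ← Finset.mul_sum]
  ring

lemma glap_lin2 (m : V → ℝ) (w : V → V → ℝ) (u v : V → ℝ) (c e : ℝ) (x : V) :
    glap m w (fun z => c * u z + e * v z) x = c * glap m w u x + e * glap m w v x := by
  simp only [glap]
  have h : ∀ y : V, ((c * u y + e * v y) - (c * u x + e * v x)) * w x y
      = c * ((u y - u x) * w x y) + e * ((v y - v x) * w x y) := by intro y; ring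
  rw [Finset.sum_congr rfl (fun y _ => h y), Finset.sum_add_distrib, ← Finset.mul_sum,
    ← Finset.mul_sum]
  ring

lemma glap_lin3 (m : V → ℝ) (w : V → V → ℝ) (u v r : V → ℝ) (c e : ℝ) (x : V) :
    glap m w (fun z => u z + c * v z + e * r z) x
      = glap m w u x + c * glap m w v x + e * glap m w r x := by
  simp only [glap]
  have h : ∀ y : V, ((u y + c * v y + e * r y) - (u x + c * v x + e * r x)) * w x y
      = (u y - u x) * w x y + c * ((v y - v x) * w x y) + e * ((r y - r x) * w x y) := by
    intro y; ring
  rw [Finset.sum_congr rfl (fun y _ => h y), Finset.sum_add_distrib, Finset.sum_add_distrib,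
    ← Finset.mul_sum, ← Finset.mul_sum]
  ring

lemma gGam_eq (m : V → ℝ) (w : V → V → ℝ) (u v : V → ℝ) (x : V) :
    gGam m w u v x = 1 / (2 * m x) * ∑ y, (u y - u x) * (v y - v x) * w x y := by
  simp only [gGam, glap]
  have h : ∀ y : V, (u y - u x) * (v y - v x) * w x y
      = (u y * v y - u x * v x) * w x y - v x * ((u y - u x) * w x y)
        - u x * ((v y - v x) * w x y) := by intro y; ring
  rw [Finset.sum_congr rfl (fun y _ => h y), Finset.sum_sub_distrib, Finset.sum_sub_distrib,
    ← Finset.mul_sum, ← Finset.mul_sum]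
  ring

lemma gGam_comm (m : V → ℝ) (w : V → V → ℝ) (u v : V → ℝ) (x : V) :
    gGam m w u v x = gGam m w v u x := by
  rw [gGam_eq, gGam_eq]
  congr 1
  exact Finset.sum_congr rfl (fun y _ => by ring)

lemma gGam_lin_left (m : V → ℝ) (w : V → V → ℝ) (u₁ u₂ v : V → ℝ) (c : ℝ) (x : V) :
    gGam m w (fun z => u₁ z + c * u₂ z) v x = gGam m w u₁ v x + c * gGam m w u₂ v x := by
  rw [gGam_eq, gGam_eq, gGam_eq]
  have h : ∀ y : V, ((u₁ y + c * u₂ y) - (u₁ x + c * u₂ x)) * (v y - v x) * w x y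
      = (u₁ y - u₁ x) * (v y - v x) * w x y + c * ((u₂ y - u₂ x) * (v y - v x) * w x y) := by
    intro y; ring
  rw [Finset.sum_congr rfl (fun y _ => h y), Finset.sum_add_distrib, ← Finset.mul_sum]
  ring

lemma gGam_aff_left (m : V → ℝ) (w : V → V → ℝ) (u v : V → ℝ) (c e : ℝ) (x : V) :
    gGam m w (fun z => c + e * u z) v x = e * gGam m w u v x := by
  rw [gGam_eq, gGam_eq]
  have h : ∀ y : V, ((c + e * u y) - (c + e * u x)) * (v y - v x) * w x y
      = e * ((u y - u x) * (v y - v x) * w x y) := by intro y; ring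
  rw [Finset.sum_congr rfl (fun y _ => h y), ← Finset.mul_sum]
  ring

lemma sum_ind_pair (a b : V) (hab : a ≠ b) (G : V → ℝ) :
    ∑ y, (if y = a ∨ y = b then (1:ℝ) else 0) * G y = G a + G b := by
  have h : ∀ y : V, (if y = a ∨ y = b then (1:ℝ) else 0) * G y
      = (if y = a then G y else 0) + (if y = b then G y else 0) := by
    intro y
    by_cases ha : y = a
    · subst ha; simp [hab]
    · by_cases hb : y = b
      · subst hb; simp [ha, Ne.symm hab]
      · simp [ha, hb]
  rw [Finset.sum_congr rfl (fun y _ => h y), Finset.sum_add_distrib,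
    Finset.sum_ite_eq' univ a G, Finset.sum_ite_eq' univ b G]
  simp

lemma sum_ind_single (x : V) (G : V → ℝ) :
    ∑ y, (if y = x then (1:ℝ) else 0) * G y = G x := by
  have h : ∀ y : V, (if y = x then (1:ℝ) else 0) * G y = (if y = x then G y else 0) := by
    intro y; by_cases hx : y = x <;> simp [hx]
  rw [Finset.sum_congr rfl (fun y _ => h y), Finset.sum_ite_eq' univ x G]
  simp

lemma glap_pair_raw (m : V → ℝ) (w : V → V → ℝ) (a b : V) (hab : a ≠ b) (z : V) :
    glap m w (fun t => if t = a ∨ t = b then (1:ℝ) else 0) z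
      = (1 / m z) * (w z a + w z b
          - (if z = a ∨ z = b then (1:ℝ) else 0) * ∑ y, w z y) := by
  simp only [glap]
  have h : ∀ y : V, ((if y = a ∨ y = b then (1:ℝ) else 0)
        - (if z = a ∨ z = b then (1:ℝ) else 0)) * w z y
      = (if y = a ∨ y = b then (1:ℝ) else 0) * w z y
        + (-(if z = a ∨ z = b then (1:ℝ) else 0)) * w z y := by intro y; ring
  rw [Finset.sum_congr rfl (fun y _ => h y), Finset.sum_add_distrib,
    sum_ind_pair a b hab (fun y => w z y), ← Finset.mul_sum]
  ring

lemma glap_single_raw (m : V → ℝ) (w : V → V → ℝ) (x z : V) :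
    glap m w (fun t => if t = x then (1:ℝ) else 0) z
      = (1 / m z) * (w z x - (if z = x then (1:ℝ) else 0) * ∑ y, w z y) := by
  simp only [glap]
  have h : ∀ y : V, ((if y = x then (1:ℝ) else 0)
        - (if z = x then (1:ℝ) else 0)) * w z y
      = (if y = x then (1:ℝ) else 0) * w z y
        + (-(if z = x then (1:ℝ) else 0)) * w z y := by intro y; ring
  rw [Finset.sum_congr rfl (fun y _ => h y), Finset.sum_add_distrib,
    sum_ind_single x (fun y => w z y), ← Finset.mul_sum]
  ring

end Aux

lemma master (m : V → ℝ) (w : V → V → ℝ) (a b x : V) (K n t : ℝ) (hn : 1 < n)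
    (hW : WeightedGraph m w) (hab : a ≠ b) (hnadj : w a b = 0) (hm : m a = m b)
    (hwe : ∀ z, z ∉ ({a, b} : Finset V) → w a z = w b z)
    (hDega : (1 / m a) * ∑ y, w a y = n * K / (n - 1))
    (hDegb : (1 / m b) * ∑ y, w b y = n * K / (n - 1))
    (hDb : ∀ z, z ∉ ({a, b} : Finset V) → 2 * w a z / m z = (n + 2) * K / (n - 1))
    (hx : x ∉ ({a, b} : Finset V)) :
    gGam2 m w (fun z => (if z = a ∨ z = b then (1:ℝ) else 0) + t * (if z = x then (1:ℝ) else 0))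
        (fun z => (if z = a ∨ z = b then (1:ℝ) else 0) + t * (if z = x then (1:ℝ) else 0)) x
      - (1/n) * (glap m w (fun z => (if z = a ∨ z = b then (1:ℝ) else 0)
          + t * (if z = x then (1:ℝ) else 0)) x)^2
      - K * gGam m w (fun z => (if z = a ∨ z = b then (1:ℝ) else 0)
            + t * (if z = x then (1:ℝ) else 0))
          (fun z => (if z = a ∨ z = b then (1:ℝ) else 0) + t * (if z = x then (1:ℝ) else 0)) x
    = ((1/2) * ((-(K/(n-1))) * ((n+2)*(K/(n-1)))
          + 2 * ((2*n+2)*(K/(n-1))) * ((n+2)*(K/(n-1))/2))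
        - (1/n) * ((n+2)*(K/(n-1)))^2 - K * ((n+2)*(K/(n-1))/2))
      + t * (-((n+2)*(K/(n-1))) * (w a x / m a) - n*(K/(n-1))*(n+2)*(K/(n-1))/2
          - ((n+2)*(K/(n-1)))^2/2 + (2*(n+2)*(K/(n-1))/n) * ((1/m x) * ∑ y, w x y)
          + K*(n+2)*(K/(n-1)))
      + t^2 * ((1/2) * (glap m w (gGam m w (fun z => if z = x then (1:ℝ) else 0)
              (fun z => if z = x then (1:ℝ) else 0)) x
            - 2 * gGam m w (fun z => if z = x then (1:ℝ) else 0)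
                (glap m w (fun z => if z = x then (1:ℝ) else 0)) x)
          - (1/n) * ((1/m x) * ∑ y, w x y)^2
          - K * gGam m w (fun z => if z = x then (1:ℝ) else 0)
              (fun z => if z = x then (1:ℝ) else 0) x) := by
  obtain ⟨hmpos, hsymm, hwnn, hloop⟩ := hW
  have hx' : ¬(x = a ∨ x = b) := by simpa using hx
  have hax : ¬(a = x) := fun h => hx' (Or.inl h.symm)
  have hbx : ¬(b = x) := fun h => hx' (Or.inr h.symm)
  set f : V → ℝ := fun z => if z = a ∨ z = b then (1:ℝ) else 0 with hfdef
  set g : V → ℝ := fun z => if z = x then (1:ℝ) else 0 with hgdef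
  set c : ℝ := K/(n-1) with hcdef
  set r : ℝ := w a x / m a with hrdef
  set dd : ℝ := (1/m x) * ∑ y, w x y with hdddef
  have hfa : f a = 1 := by simp [hfdef]
  have hfb : f b = 1 := by simp [hfdef]
  have hfx : f x = 0 := by simp [hfdef, hx']
  have hga : g a = 0 := by simp [hgdef, hax]
  have hgb : g b = 0 := by simp [hgdef, hbx]
  have hgx : g x = 1 := by simp [hgdef]
  have hwba : w b a = 0 := (hsymm b a).trans hnadj
  have hwxa : w x a = w a x := hsymm x a
  have hwbx : w b x = w a x := (hwe x hx).symm
  have hwxb : w x b = w a x := (hsymm x b).trans hwbx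
  have hSa : (1/m a) * ∑ y, w a y = n * c := by rw [hDega, hcdef]; ring
  have hSb : (1/m b) * ∑ y, w b y = n * c := by rw [hDegb, hcdef]; ring
  have hwm : w a x / m x = (n+2)*c/2 := by
    have h := hDb x hx
    rw [hcdef]
    linear_combination (1/2) * h
  -- glap of f as a function
  have hEf : glap m w f = fun z => (n+2)*c + (-((2*n+2)*c)) * f z := by
    funext z
    rw [hfdef, glap_pair_raw m w a b hab z]
    by_cases hza : z = a ∨ z = b
    · rcases hza with hza | hza
      · subst hza
        simp [hloop, hnadj]
        linear_combination (-1 : ℝ) * hSa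
      · subst hza
        simp [hloop, hwba, hab]
        linear_combination (-1 : ℝ) * hSb
    · have hzmem : z ∉ ({a, b} : Finset V) := by simpa using hza
      have h := hDb z hzmem
      simp only [hza, if_false]
      rw [hsymm z a, hsymm z b, ← hwe z hzmem]
      linear_combination h
  -- glap of g at the three relevant points
  have hEga : glap m w g a = r := by
    rw [hgdef, glap_single_raw m w x a]
    simp only [if_neg hax]
    rw [hrdef]; ring
  have hEgb : glap m w g b = r := by
    rw [hgdef, glap_single_raw m w x b]
    simp only [if_neg hbx]
    rw [hrdef, ← hwbx, ← hm]; ring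
  have hEgx : glap m w g x = -dd := by
    rw [hgdef, glap_single_raw m w x x]
    simp [hloop]
    rw [hdddef]; ring
  -- Gamma(f,f)
  have hGff : gGam m w f f = fun z => (n+2)*c/2 + (-c) * f z := by
    funext z
    have hffid : (fun y => f y * f y) = f := by
      funext y
      rw [hfdef]
      by_cases h : y = a ∨ y = b <;> simp [h]
    simp only [gGam]
    rw [hffid]
    simp only [hEf]
    simp only [hfdef]
    by_cases h : z = a ∨ z = b
    · rw [if_pos h]; ring
    · rw [if_neg h]; ring
  -- Gamma(f,g)
  have hzero : ∀ z, glap m w (fun _ => (0:ℝ)) z = 0 := by intro z; simp [glap]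
  have hGfg : gGam m w f g = fun z => (-(r/2)) * f z + (-((n+2)*c/2)) * g z := by
    funext z
    have hfgid : (fun y => f y * g y) = fun _ => (0:ℝ) := by
      funext y
      rw [hfdef, hgdef]
      by_cases h : y = x
      · subst h; simp [hx']
      · simp [h]
    simp only [gGam]
    rw [hfgid, hzero z]
    by_cases hza : z = a
    · subst hza
      rw [hfa, hga, hEga]
      rw [hrdef]; ring
    · by_cases hzb : z = b
      · subst hzb
        rw [hfb, hgb, hEgb]
        rw [hrdef]; ring
      · by_cases hzx : z = x
        · subst hzx
          rw [hfx, hgx]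
          simp only [hEf]
          rw [hfx]; ring
        · have hfz : f z = 0 := by rw [hfdef]; simp [hza, hzb]
          have hgz : g z = 0 := by rw [hgdef]; simp [hzx]
          rw [hfz, hgz]; ring
  -- atom values at x
  have hA1 : glap m w f x = (n+2)*c := by simp only [hEf]; rw [hfx]; ring
  have hG11 : gGam m w f f x = (n+2)*c/2 := by simp only [hGff]; rw [hfx]; ring
  have hG12 : gGam m w f g x = -((n+2)*c/2) := by simp only [hGfg]; rw [hfx, hgx]; ring
  have hL11 : glap m w (gGam m w f f) x = (-c) * ((n+2)*c) := by
    rw [hGff, glap_aff m w f ((n+2)*c/2) (-c) x, hA1]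
  have hL12 : glap m w (gGam m w f g) x
      = (-(r/2)) * ((n+2)*c) + (-((n+2)*c/2)) * (-dd) := by
    rw [hGfg, glap_lin2 m w f g (-(r/2)) (-((n+2)*c/2)) x, hA1, hEgx]
  have hPff : gGam m w (glap m w f) f x = (-((2*n+2)*c)) * ((n+2)*c/2) := by
    rw [hEf, gGam_aff_left m w f f ((n+2)*c) (-((2*n+2)*c)) x, hG11]
  have hPfg : gGam m w (glap m w f) g x = (-((2*n+2)*c)) * (-((n+2)*c/2)) := by
    rw [hEf, gGam_aff_left m w f g ((n+2)*c) (-((2*n+2)*c)) x, hG12]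
  have hPfd : gGam m w f (glap m w g) x = ((n+2)*c/2) * (r + dd) := by
    rw [gGam_eq]
    have h : ∀ y : V, (f y - f x) * (glap m w g y - glap m w g x) * w x y
        = (if y = a ∨ y = b then (1:ℝ) else 0) * ((glap m w g y + dd) * w x y) := by
      intro y
      rw [hfx, hEgx, hfdef]
      ring
    rw [Finset.sum_congr rfl (fun y _ => h y),
      sum_ind_pair a b hab (fun y => (glap m w g y + dd) * w x y)]
    rw [hEga, hEgb, hwxa, hwxb]
    linear_combination (r + dd) * hwm
  -- expansion of the perturbed function
  have hglapφ : glap m w (fun z => f z + t * g z) = fun z => glap m w f z + t * glap m w g z :=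
    funext fun z => glap_lin m w f g t z
  have hΓφφ : gGam m w (fun z => f z + t * g z) (fun z => f z + t * g z)
      = fun z => gGam m w f f z + (2*t) * gGam m w f g z + t^2 * gGam m w g g z := by
    funext z
    rw [gGam_lin_left m w f g (fun z => f z + t * g z) t z,
      gGam_comm m w f (fun z => f z + t * g z) z,
      gGam_lin_left m w f g f t z,
      gGam_comm m w g (fun z => f z + t * g z) z,
      gGam_lin_left m w f g g t z,
      gGam_comm m w g f z]
    ring
  have e1 : gGam m w (glap m w f) (fun z => f z + t * g z) x
      = (-((2*n+2)*c)) * ((n+2)*c/2) + t * ((-((2*n+2)*c)) * (-((n+2)*c/2))) := by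
    rw [gGam_comm m w (glap m w f) (fun z => f z + t * g z) x,
      gGam_lin_left m w f g (glap m w f) t x,
      gGam_comm m w f (glap m w f) x, gGam_comm m w g (glap m w f) x, hPff, hPfg]
  have e2 : gGam m w (glap m w g) (fun z => f z + t * g z) x
      = ((n+2)*c/2) * (r + dd) + t * gGam m w g (glap m w g) x := by
    rw [gGam_comm m w (glap m w g) (fun z => f z + t * g z) x,
      gGam_lin_left m w f g (glap m w g) t x, hPfd]
  -- main assembly
  simp only [gGam2]
  rw [gGam_comm m w (fun z => f z + t * g z)
    (glap m w (fun z => f z + t * g z)) x]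
  rw [hΓφφ, hglapφ]
  rw [glap_lin3 m w (gGam m w f f) (gGam m w f g) (gGam m w g g) (2*t) (t^2) x]
  rw [gGam_lin_left m w (glap m w f) (glap m w g) (fun z => f z + t * g z) t x]
  rw [e1, e2, hL11, hL12]
  simp only [hglapφ, hΓφφ]
  rw [hA1, hEgx, hG11, hG12]
  ring

set_option maxHeartbeats 2000000 in
/-- under (A1)-(A4): if `1 < n < 2` then `CD(K,n)` fails at every
interior vertex; if `n = 2`, `CD(K,2)` holds at an interior vertex iff `|Ω| = 1`. -/
theorem stmt16 (m : V → ℝ) (w : V → V → ℝ) (a b : V) (hW : WeightedGraph m w)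
    (K n : ℝ) (hK : 0 < K) (hn : 1 < n)
    (hab : a ≠ b) (hnadj : w a b = 0)
    (hm : m a = m b)
    (hadj : ∀ x, x ∉ ({a, b} : Finset V) → 0 < w a x)
    (hwe : ∀ x, x ∉ ({a, b} : Finset V) → w a x = w b x)
    (hDega : (1 / m a) * ∑ y, w a y = n * K / (n - 1))
    (hDegb : (1 / m b) * ∑ y, w b y = n * K / (n - 1))
    (hDb : ∀ x, x ∉ ({a, b} : Finset V) → 2 * w a x / m x = (n + 2) * K / (n - 1)) :
    (n < 2 → ∀ x, x ∉ ({a, b} : Finset V) →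
      ¬ (∀ f : V → ℝ,
          gGam2 m w f f x ≥ (1 / n) * (glap m w f x) ^ 2 + K * gGam m w f f x)) ∧
    (n = 2 → ∀ x, x ∉ ({a, b} : Finset V) →
      ((∀ f : V → ℝ,
          gGam2 m w f f x ≥ (1 / n) * (glap m w f x) ^ 2 + K * gGam m w f f x) ↔
        (({a, b} : Finset V)ᶜ).card = 1)) := by

  have hmpos := hW.1
  have hsymm := hW.2.1
  have hwnn := hW.2.2.1
  have hloop := hW.2.2.2
  have hn1 : (0:ℝ) < n - 1 := by linarith
  have hne1 : n - 1 ≠ 0 := ne_of_gt hn1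
  constructor
  · -- case 1 < n < 2
    intro hn2 x hx hCD
    have hM := master m w a b x K n 0 hn hW hab hnadj hm hwe hDega hDegb hDb hx
    have hC := hCD (fun z => (if z = a ∨ z = b then (1:ℝ) else 0)
      + 0 * (if z = x then (1:ℝ) else 0))
    have h0 : (0:ℝ) ≤ ((1/2) * ((-(K/(n-1))) * ((n+2)*(K/(n-1)))
          + 2 * ((2*n+2)*(K/(n-1))) * ((n+2)*(K/(n-1))/2))
        - (1/n) * ((n+2)*(K/(n-1)))^2 - K * ((n+2)*(K/(n-1))/2))
      + 0 * (-((n+2)*(K/(n-1))) * (w a x / m a) - n*(K/(n-1))*(n+2)*(K/(n-1))/2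
          - ((n+2)*(K/(n-1)))^2/2 + (2*(n+2)*(K/(n-1))/n) * ((1/m x) * ∑ y, w x y)
          + K*(n+2)*(K/(n-1)))
      + 0^2 * ((1/2) * (glap m w (gGam m w (fun z => if z = x then (1:ℝ) else 0)
              (fun z => if z = x then (1:ℝ) else 0)) x
            - 2 * gGam m w (fun z => if z = x then (1:ℝ) else 0)
                (glap m w (fun z => if z = x then (1:ℝ) else 0)) x)
          - (1/n) * ((1/m x) * ∑ y, w x y)^2
          - K * gGam m w (fun z => if z = x then (1:ℝ) else 0)
              (fun z => if z = x then (1:ℝ) else 0) x) := by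
      rw [← hM]; linarith [hC]
    have hQneg : (1/2) * ((-(K/(n-1))) * ((n+2)*(K/(n-1)))
          + 2 * ((2*n+2)*(K/(n-1))) * ((n+2)*(K/(n-1))/2))
        - (1/n) * ((n+2)*(K/(n-1)))^2 - K * ((n+2)*(K/(n-1))/2) < 0 := by
      obtain ⟨c, hgen⟩ : ∃ c, K/(n-1) = c := ⟨_, rfl⟩
      have hcpos : 0 < c := hgen ▸ div_pos hK hn1
      have hK' : K = c*(n-1) := by rw [← hgen]; field_simp
      rw [hgen, hK']
      have heq : (1/2) * ((-c) * ((n+2)*c) + 2 * ((2*n+2)*c) * ((n+2)*c/2))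
          - (1/n) * ((n+2)*c)^2 - (c*(n-1)) * ((n+2)*c/2)
          = c^2*(n+2)^2 * (1/2 - 1/n) := by ring
      have hhalf : (1:ℝ)/2 < 1/n :=
        one_div_lt_one_div_of_lt (by linarith) hn2
      have hP : 0 < c^2*(n+2)^2 :=
        mul_pos (pow_pos hcpos 2) (pow_pos (by linarith : (0:ℝ) < n+2) 2)
      have hlt : c^2*(n+2)^2 * (1/2 - 1/n) < 0 :=
        mul_neg_of_pos_of_neg hP (by linarith)
      linarith [heq, hlt]
    linarith [h0, hQneg]
  · -- case n = 2
    intro hn2 x hx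
    have hx' : ¬(x = a ∨ x = b) := by simpa using hx
    have hMa : 0 < m a := hmpos a
    constructor
    · -- CD implies |Ω| = 1
      intro hCD
      by_contra hcard
      have hxmem : x ∈ ({a,b} : Finset V)ᶜ := Finset.mem_compl.mpr hx
      have hpos : 0 < (({a,b} : Finset V)ᶜ).card := Finset.card_pos.mpr ⟨x, hxmem⟩
      have hlt1 : 1 < (({a,b} : Finset V)ᶜ).card := by omega
      obtain ⟨z, hzmem, hzx⟩ := Finset.exists_mem_ne hlt1 x
      have hz : z ∉ ({a,b} : Finset V) := Finset.mem_compl.mp hzmem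
      obtain ⟨dd, hdd⟩ : ∃ v, (1/m x) * ∑ y, w x y = v := ⟨_, rfl⟩
      obtain ⟨r, hr⟩ : ∃ v, w a x / m a = v := ⟨_, rfl⟩
      obtain ⟨CC, hCC⟩ : ∃ v, v = (1/2) * (glap m w (gGam m w (fun z => if z = x then (1:ℝ) else 0)
              (fun z => if z = x then (1:ℝ) else 0)) x
            - 2 * gGam m w (fun z => if z = x then (1:ℝ) else 0)
                (glap m w (fun z => if z = x then (1:ℝ) else 0)) x)
          - (1/n) * dd^2
          - K * gGam m w (fun z => if z = x then (1:ℝ) else 0)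
              (fun z => if z = x then (1:ℝ) else 0) x := ⟨_, rfl⟩
      obtain ⟨TB, hTB⟩ : ∃ v, v = -((n+2)*(K/(n-1))) * r - n*(K/(n-1))*(n+2)*(K/(n-1))/2
          - ((n+2)*(K/(n-1)))^2/2 + (2*(n+2)*(K/(n-1))/n) * dd
          + K*(n+2)*(K/(n-1)) := ⟨_, rfl⟩
      obtain ⟨t, htdef⟩ : ∃ v, v = -(TB/(|CC|+1)) := ⟨_, rfl⟩
      have hM := master m w a b x K n t hn hW hab hnadj hm hwe hDega hDegb hDb hx
      rw [hdd, hr, ← hTB, ← hCC] at hM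
      have hQf0 : (1/2) * ((-(K/(n-1))) * ((n+2)*(K/(n-1)))
            + 2 * ((2*n+2)*(K/(n-1))) * ((n+2)*(K/(n-1))/2))
          - (1/n) * ((n+2)*(K/(n-1)))^2 - K * ((n+2)*(K/(n-1))/2) = 0 := by
        rw [hn2]; ring
      rw [hQf0] at hM
      have hC := hCD (fun z => (if z = a ∨ z = b then (1:ℝ) else 0)
        + t * (if z = x then (1:ℝ) else 0))
      have hge : (0:ℝ) ≤ 0 + t * TB + t^2 * CC := by rw [← hM]; linarith [hC]
      -- numeric facts
      have hTBval : TB = 4*K*(dd - r - 2*K) := by rw [hTB, hn2]; ring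
      have hddge : 4*K ≤ dd := by
        have hsub : w x a + w x b ≤ ∑ y, w x y := by
          have h := Finset.sum_le_sum_of_subset_of_nonneg
            (Finset.subset_univ ({a,b} : Finset V)) (fun i _ _ => hwnn x i)
          rwa [Finset.sum_pair hab] at h
        have h1 : (1/m x) * (w x a + w x b) ≤ dd := by
          rw [← hdd]
          exact mul_le_mul_of_nonneg_left hsub (le_of_lt (one_div_pos.mpr (hmpos x)))
        have h2 : (1/m x) * (w x a + w x b) = 2 * w a x / m x := by
          rw [hsymm x a, hsymm x b, ← hwe x hx]; ring
        have h3 : 2 * w a x / m x = 4*K := by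
          rw [hDb x hx, hn2]; norm_num
        linarith
      have hrlt : r < 2*K := by
        have hz2 : 0 < w a z := hadj z hz
        have hsub2 : w a x + w a z ≤ ∑ y, w a y := by
          have h := Finset.sum_le_sum_of_subset_of_nonneg
            (Finset.subset_univ ({x,z} : Finset V)) (fun i _ _ => hwnn a i)
          rwa [Finset.sum_pair (Ne.symm hzx)] at h
        have hSa : ∑ y, w a y = 2*K*m a := by
          have h := hDega
          rw [hn2] at h
          norm_num at h
          field_simp at h
          linarith
        rw [← hr, div_lt_iff₀ hMa]
        have : w a x < ∑ y, w a y := by linarith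
        linarith [hSa]
      have hTBpos : 0 < TB := by
        rw [hTBval]
        apply mul_pos (by linarith) (by linarith)
      have hA : (0:ℝ) < |CC| + 1 := by positivity
      have h1 : t*TB + t^2*CC = TB^2*(CC - (|CC|+1))/(|CC|+1)^2 := by
        rw [htdef]; field_simp; ring
      have h2 : TB^2*(CC - (|CC|+1)) < 0 :=
        mul_neg_of_pos_of_neg (pow_pos hTBpos 2) (by linarith [le_abs_self CC])
      have h3 : TB^2*(CC - (|CC|+1))/(|CC|+1)^2 < 0 :=
        div_neg_of_neg_of_pos h2 (by positivity)
      linarith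
    · -- |Ω| = 1 implies CD
      intro hcard u
      obtain ⟨y, hy⟩ := Finset.card_eq_one.mp hcard
      have hxmem : x ∈ ({a,b} : Finset V)ᶜ := Finset.mem_compl.mpr hx
      have hcompl : ({a,b} : Finset V)ᶜ = {x} := by
        rw [hy] at hxmem ⊢
        rw [Finset.mem_singleton.mp hxmem]
      have hsum : ∀ F : V → ℝ, ∑ y, F y = F a + F b + F x := by
        intro F
        have h := Finset.sum_add_sum_compl ({a,b} : Finset V) F
        rw [hcompl, Finset.sum_singleton, Finset.sum_pair hab] at h
        linarith
      have hwba : w b a = 0 := (hsymm b a).trans hnadj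
      have hwxa : w x a = w a x := hsymm x a
      have hwbx : w b x = w a x := (hwe x hx).symm
      have hwxb : w x b = w a x := (hsymm x b).trans hwbx
      have hMane : m a ≠ 0 := ne_of_gt hMa
      have hWax : w a x = 2*K*m a := by
        have h := hDega
        rw [hsum (fun y => w a y), hloop a, hnadj, hn2] at h
        norm_num at h
        field_simp at h
        linarith
      have hmb : m b = m a := hm.symm
      have hmx : m x = m a := by
        have h := hDb x hx
        rw [hn2] at h
        norm_num at h
        rw [hWax] at h
        have hmxne : m x ≠ 0 := ne_of_gt (hmpos x)
        field_simp at h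
        have hK' : K ≠ 0 := ne_of_gt hK
        nlinarith [h]
      have hEq : (1 / n) * (glap m w u x) ^ 2 + K * gGam m w u u x = gGam2 m w u u x := by
        rw [hn2]
        simp only [gGam2, gGam, glap, hsum]
        simp only [hloop, hnadj, hwba, hwxa, hwbx, hwxb, hmb, hmx, hWax]
        field_simp
        ring
      exact le_of_eq hEq
end
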